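/- arXiv:2006.16294 — 4 statements merged into one kernel-verified Lean document; each statement's English description precedes it below -/
import Mathlib

section
/- For any real numbers v and w, the product of an element of A_v and an element of A_w lies in A_{v+w}; in particular A_0 is a subring of F[u] containing the ring of integers of F, and each A_v is an A_0-module. -/
open Polynomial

/-- `f ∈ A_v` iff writing `f = ∑ y_j E^j` with `E = u + p` (so `y_j` is the `j`-th
coefficient of `f.comp (X - C p)`), every nonzero `y_j` satisfies
`v_p(y_j) + v_p(j!) + j ≥ v`. -/
def MemA {F : Type*} [Field F] (p : ℕ) (vp : F → ℝ) (v : ℝ) (f : Polynomial F) : Prop :=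
  ∀ j : ℕ, (f.comp (X - C (p : F))).coeff j ≠ 0 →
    v ≤ vp ((f.comp (X - C (p : F))).coeff j) + (padicValNat p (Nat.factorial j) : ℝ) + (j : ℝ)

/- The weight `v_p(j!) + j` is superadditive in `j` because `a! b! ∣ (a + b)!`, and a
nonarchimedean valuation of a sum of products is at least the least sum of valuations of the
factors; so the `E`-adic coefficients of `f g`, being convolutions, inherit the bound `v + w`. -/

open scoped Nat

theorem padicValNat_factorial_add_factorial_le {p : ℕ} [Fact p.Prime] (a b : ℕ) :
    padicValNat p (a !) + padicValNat p (b !) ≤ padicValNat p ((a + b)!) := by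
  obtain ⟨c, hc⟩ := Nat.factorial_mul_factorial_dvd_factorial_add a b
  have hc0 : c ≠ 0 := by
    rintro rfl
    exact Nat.factorial_ne_zero (a + b) (by simpa using hc)
  rw [hc, padicValNat.mul (by positivity) hc0, padicValNat.mul (by positivity) (by positivity)]
  exact Nat.le_add_right _ _

section Valuation

variable {F : Type*} [Field F] (vp : F → ℝ)

theorem vp_one (hmul : ∀ x y : F, x ≠ 0 → y ≠ 0 → vp (x * y) = vp x + vp y) : vp 1 = 0 := by
  have := hmul 1 1 one_ne_zero one_ne_zero
  rw [mul_one] at this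
  linarith

theorem le_vp_add (hadd : ∀ x y : F, x ≠ 0 → y ≠ 0 → x + y ≠ 0 → min (vp x) (vp y) ≤ vp (x + y))
    {c : ℝ} {x y : F} (hx : x ≠ 0 → c ≤ vp x) (hy : y ≠ 0 → c ≤ vp y) (hxy : x + y ≠ 0) :
    c ≤ vp (x + y) := by
  by_cases hx0 : x = 0
  · subst hx0
    rw [zero_add] at hxy ⊢
    exact hy hxy
  by_cases hy0 : y = 0
  · subst hy0
    rw [add_zero] at hxy ⊢
    exact hx hxy
  exact (le_min (hx hx0) (hy hy0)).trans (hadd x y hx0 hy0 hxy)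

theorem le_vp_sum (hadd : ∀ x y : F, x ≠ 0 → y ≠ 0 → x + y ≠ 0 → min (vp x) (vp y) ≤ vp (x + y))
    {ι : Type*} (s : Finset ι) (f : ι → F) {c : ℝ}
    (h : ∀ i ∈ s, f i ≠ 0 → c ≤ vp (f i)) (hs : ∑ i ∈ s, f i ≠ 0) :
    c ≤ vp (∑ i ∈ s, f i) := by
  classical
  induction s using Finset.induction_on with
  | empty => simp at hs
  | insert a s ha ih =>
    rw [Finset.sum_insert ha] at hs ⊢
    exact le_vp_add vp hadd (h a (s.mem_insert_self a))
      (ih fun i hi => h i (Finset.mem_insert_of_mem hi)) hs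

end Valuation

namespace MemA

variable {F : Type*} [Field F] {p : ℕ} {vp : F → ℝ}

theorem C_of_le {v : ℝ} {x : F} (hx : v ≤ vp x) : MemA p vp v (C x) := by
  intro j hj
  rw [C_comp, coeff_C] at hj ⊢
  obtain rfl : j = 0 := by_contra fun h => hj (if_neg h)
  simpa using hx

theorem add (hadd : ∀ x y : F, x ≠ 0 → y ≠ 0 → x + y ≠ 0 → min (vp x) (vp y) ≤ vp (x + y))
    {v : ℝ} {f g : F[X]} (hf : MemA p vp v f) (hg : MemA p vp v g) :
    MemA p vp v (f + g) := by
  intro j hj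
  rw [add_comp, coeff_add] at hj ⊢
  have key := le_vp_add vp hadd (c := v - padicValNat p (j !) - j)
    (fun h => by linarith [hf j h]) (fun h => by linarith [hg j h]) hj
  linarith

theorem mul [Fact p.Prime] (hmul : ∀ x y : F, x ≠ 0 → y ≠ 0 → vp (x * y) = vp x + vp y)
    (hadd : ∀ x y : F, x ≠ 0 → y ≠ 0 → x + y ≠ 0 → min (vp x) (vp y) ≤ vp (x + y))
    {v w : ℝ} {f g : F[X]} (hf : MemA p vp v f) (hg : MemA p vp w g) :
    MemA p vp (v + w) (f * g) := by
  intro j hj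
  suffices v + w - padicValNat p (j !) - j ≤ vp (((f * g).comp (X - C (p : F))).coeff j) by
    linarith
  rw [mul_comp, coeff_mul] at hj ⊢
  refine le_vp_sum vp hadd _ _ (fun ⟨a, b⟩ hab hab0 => ?_) hj
  obtain rfl : a + b = j := Finset.HasAntidiagonal.mem_antidiagonal.mp hab
  have ha := left_ne_zero_of_mul hab0
  have hb := right_ne_zero_of_mul hab0
  have hfact : (padicValNat p (a !) + padicValNat p (b !) : ℝ) ≤ padicValNat p ((a + b)!) := by
    exact_mod_cast padicValNat_factorial_add_factorial_le a b
  rw [hmul _ _ ha hb]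
  push_cast
  linarith [hf a ha, hg b hb]

end MemA

theorem memA_mul_and_subring_general {F : Type*} [Field F] (p : ℕ) (hp : p.Prime)
    (vp : F → ℝ)
    (hmul : ∀ x y : F, x ≠ 0 → y ≠ 0 → vp (x * y) = vp x + vp y)
    (hadd : ∀ x y : F, x ≠ 0 → y ≠ 0 → x + y ≠ 0 → min (vp x) (vp y) ≤ vp (x + y)) :
    (∀ (v w : ℝ) (f g : Polynomial F),
        MemA p vp v f → MemA p vp w g → MemA p vp (v + w) (f * g)) ∧
    (∀ (v : ℝ) (f g : Polynomial F), MemA p vp v f → MemA p vp v g → MemA p vp v (f + g)) ∧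
    MemA p vp 0 (1 : Polynomial F) ∧
    (∀ x : F, x ≠ 0 → 0 ≤ vp x → MemA p vp 0 (C x)) ∧
    (∀ (v : ℝ) (f g : Polynomial F), MemA p vp 0 f → MemA p vp v g → MemA p vp v (f * g)) := by
  have := Fact.mk hp
  refine ⟨fun v w f g => MemA.mul hmul hadd, fun v f g => MemA.add hadd, ?_,
    fun x _ hx => MemA.C_of_le hx, fun v f g hf hg => by simpa using MemA.mul hmul hadd hf hg⟩
  rw [← C_1]
  exact MemA.C_of_le (vp_one vp hmul).ge

/-- `A_v · A_w ⊆ A_{v+w}`; in particular `A_0` is a subring of `F[u]` containing the ring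
of integers of `F`, and each `A_v` is an `A_0`-module. -/
theorem memA_mul_and_subring {F : Type*} [Field F] (p : ℕ) (hp : p.Prime) (hodd : p ≠ 2)
    (vp : F → ℝ)
    (hmul : ∀ x y : F, x ≠ 0 → y ≠ 0 → vp (x * y) = vp x + vp y)
    (hadd : ∀ x y : F, x ≠ 0 → y ≠ 0 → x + y ≠ 0 → min (vp x) (vp y) ≤ vp (x + y))
    (hvp : vp ((p : ℕ) : F) = 1) :
    (∀ (v w : ℝ) (f g : Polynomial F),
        MemA p vp v f → MemA p vp w g → MemA p vp (v + w) (f * g)) ∧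
    (∀ (v : ℝ) (f g : Polynomial F), MemA p vp v f → MemA p vp v g → MemA p vp v (f + g)) ∧
    MemA p vp 0 (1 : Polynomial F) ∧
    (∀ x : F, x ≠ 0 → 0 ≤ vp x → MemA p vp 0 (C x)) ∧
    (∀ (v : ℝ) (f g : Polynomial F), MemA p vp 0 f → MemA p vp v g → MemA p vp v (f * g)) :=
  memA_mul_and_subring_general p hp vp hmul hadd
end

section
/- With the recursive definitions below, for every i with 1 <= i <= h-1 one has v_p(x_i) + v_p(i!) + i >= v_p(b). -/
/-!
Expand everything at `u = π` with `taylor`, so that `E` becomes `X`. The recursion for `b_i`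
becomes one for its Taylor coefficients `β_{i,k}`: `β_{i+1,k}` is `β_{i,k+1}` plus
`x_i (a - d) - i x_i` when `k = 0`, and plus a multiple of `c x_i x_k` with `k ≤ i` otherwise.
One then shows by induction on `i` that `v(b) ≤ v(i! p^i x_i)` and
`v(b) ≤ v((k+i)! p^(k+i) β_{i,k+1})`. The weights `w_n = n! p^n` make the division defining
`x_{i+1}` exact, `w_{i+1} / ((i+1) π) = -w_i`, and satisfy `w_{m+k} = binom(m+k, k) w_m w_k`,
which together with `v(bc) ≥ 0` controls the products `c x_i x_k`.
Finally `v(i! p^i) = v_p(i!) + i`.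
-/

open Polynomial Finset Nat

namespace AddValuation

variable {R Γ : Type*} [CommRing R] [LinearOrderedAddCommMonoidWithTop Γ] (v : AddValuation R Γ)

theorem map_natCast_nonneg (n : ℕ) : 0 ≤ v n := by
  induction n with
  | zero => simp
  | succ n ih => exact Nat.cast_succ (R := R) n ▸ v.map_le_add ih v.map_one.ge

theorem map_intCast_nonneg (z : ℤ) : 0 ≤ v z := by
  obtain ⟨n, rfl | rfl⟩ := z.eq_nat_or_neg
  · exact_mod_cast v.map_natCast_nonneg n
  · simpa using v.map_natCast_nonneg n

theorem le_map_mul_of_nonneg_left {s : R} (hs : 0 ≤ v s) (y : R) : v y ≤ v (s * y) := by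
  rw [v.map_mul]
  exact le_add_of_nonneg_left hs

theorem le_map_mul_mul {b c y z : R} (hbc : 0 ≤ v (b * c)) (hy : v b ≤ v y) (hz : v b ≤ v z) :
    v b ≤ v (c * y * z) := by
  rw [v.map_mul] at hbc
  calc v b ≤ v b + v c + v b := le_add_of_nonneg_left hbc
    _ ≤ v y + v c + v z := by gcongr
    _ = v (c * y * z) := by rw [v.map_mul, v.map_mul, add_comm (v c)]

theorem map_natCast_eq_zero_of_not_dvd {p m : ℕ} (hp : p.Prime) (hvp : 0 < v p)
    (hpm : ¬p ∣ m) : v m = 0 := by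
  refine le_antisymm ?_ (v.map_natCast_nonneg m)
  by_contra! hvm
  obtain ⟨u, w, huw⟩ : IsCoprime (m : ℤ) p :=
    Nat.isCoprime_iff_coprime.mpr (hp.coprime_iff_not_dvd.mpr hpm).symm
  have hR : (u : R) * m + (w : R) * p = 1 := by exact_mod_cast congrArg (Int.cast : ℤ → R) huw
  have hpos : 0 < v 1 := hR ▸ v.map_lt_add
    (v.map_mul _ _ ▸ lt_add_of_nonneg_of_lt (v.map_intCast_nonneg u) hvm)
    (v.map_mul _ _ ▸ lt_add_of_nonneg_of_lt (v.map_intCast_nonneg w) hvp)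
  exact hpos.ne' v.map_one

theorem map_natCast_eq_padicValNat_nsmul {p n : ℕ} [hp : Fact p.Prime] (hvp : 0 < v p)
    (hn : n ≠ 0) : v n = padicValNat p n • v p := by
  obtain ⟨e, m, hpm, rfl⟩ := Nat.exists_eq_pow_mul_and_not_dvd hn p hp.out.ne_one
  have hm : m ≠ 0 := by rintro rfl; simp at hn
  rw [padicValNat.mul (pow_ne_zero _ hp.out.ne_zero) hm, padicValNat.prime_pow,
    padicValNat.eq_zero_of_not_dvd hpm, add_zero, Nat.cast_mul, v.map_mul, Nat.cast_pow,
    v.map_pow, v.map_natCast_eq_zero_of_not_dvd hp.out hvp hpm, add_zero]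

end AddValuation

theorem Polynomial.taylor_neg_X_add_C {R : Type*} [CommRing R] (r : R) :
    taylor (-r) (X + C r) = X := by
  simp [taylor_X, taylor_C]

theorem Polynomial.coeff_sum_C_mul_X_pow {R : Type*} [CommRing R] (x : ℕ → R) (s : Finset ℕ)
    (k : ℕ) : (∑ j ∈ s, C (x j) * X ^ j).coeff k = if k ∈ s then x k else 0 := by
  simp [finsetSum_coeff]

theorem Nat.cast_factorial_add_mul_pow {R : Type*} [CommRing R] (r : R) (m k : ℕ) :
    ((m + k)! : R) * r ^ (m + k) =
      ((m + k).choose k : R) * ((m ! : R) * r ^ m) * ((k ! : R) * r ^ k) := by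
  rw [← Nat.add_choose_mul_factorial_mul_factorial m k]
  push_cast
  ring

theorem Nat.cast_factorial_succ_mul_pow_succ_mul_div {K : Type*} [Field K] [CharZero K] {r : K}
    (hr : r ≠ 0) (i : ℕ) (y : K) :
    ((i + 1)! : K) * r ^ (i + 1) * (y / ((i + 1) * -r)) = -((i ! : K) * r ^ i * y) := by
  have : (i + 1 : K) ≠ 0 := by exact_mod_cast i.succ_ne_zero
  rw [Nat.factorial_succ]
  push_cast
  field_simp
  ring

/-- The paper's recursions with `π = -r` and `E = X + C r`; `B_succ` is the recursion for
`b_{i+1}` multiplied through by `E`, which encodes the exact division by `E`. -/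
structure IsRecursion {F : Type*} [Field F] (r a b c d : F) (n : ℕ) (D B : ℕ → F[X])
    (x : ℕ → F) : Prop where
  D_one : D 1 = C d
  B_one : B 1 = C b
  x_one : x 1 = b / -r
  D_succ : ∀ i, 1 ≤ i → i < n → D (i + 1) = D i + C c * C (x i) * (X + C r) ^ i
  B_succ : ∀ i, 1 ≤ i → i < n →
    (X + C r) * B (i + 1) =
      (X + C r) * (C (x i) * (C a - C c * (∑ j ∈ Icc 1 i, C (x j) * (X + C r) ^ j) - D i)) +
        (B i - (i : F[X]) * C (x i) * X)
  x_succ : ∀ i, 1 ≤ i → i < n → x (i + 1) = (B (i + 1)).eval (-r) / ((i + 1) * -r)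

namespace IsRecursion

variable {F : Type*} [Field F] {r a b c d : F} {n : ℕ} {D B : ℕ → F[X]} {x : ℕ → F}
  (hrec : IsRecursion r a b c d n D B x)
include hrec

theorem taylor_D {i : ℕ} (hi : 1 ≤ i) (hin : i ≤ n) :
    taylor (-r) (D i) = C d + C c * ∑ j ∈ Ico 1 i, C (x j) * X ^ j := by
  induction i, hi using Nat.le_induction with
  | base => simp [hrec.D_one, taylor_C]
  | succ i hi ih =>
    rw [hrec.D_succ i hi hin, map_add, ih (by omega), taylor_mul, taylor_mul, taylor_pow,
      taylor_neg_X_add_C, taylor_C, taylor_C, Finset.sum_Ico_succ_top hi]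
    ring

theorem X_mul_taylor_B_succ {i : ℕ} (hi : 1 ≤ i) (hin : i < n) :
    X * taylor (-r) (B (i + 1)) =
      X * (C (x i) * (C (a - d) - C c * (∑ j ∈ Icc 1 i, C (x j) * X ^ j
          + ∑ j ∈ Ico 1 i, C (x j) * X ^ j))) +
        (taylor (-r) (B i) - C (i * x i) * (X - C r)) := by
  have h := congrArg (taylor (-r)) (hrec.B_succ i hi hin)
  simp only [↓taylor_neg_X_add_C, map_sub, map_add, map_sum, taylor_mul, taylor_pow, taylor_C,
    taylor_X, ← C_eq_natCast, hrec.taylor_D hi hin.le] at h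
  rw [h]
  simp only [C_sub, C_mul, C_neg]
  ring

theorem coeff_taylor_B_succ_zero {i : ℕ} (hi : 1 ≤ i) (hin : i < n) :
    (taylor (-r) (B (i + 1))).coeff 0 = x i * (a - d) + (taylor (-r) (B i)).coeff 1 - i * x i := by
  have h := congrArg (coeff · 1) (hrec.X_mul_taylor_B_succ hi hin)
  simp only [coeff_X_mul, coeff_add, coeff_sub, coeff_C_mul, coeff_X_one, coeff_C_zero,
    coeff_sum_C_mul_X_pow, coeff_C_succ, mem_Icc, mem_Ico, nonpos_iff_eq_zero, one_ne_zero,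
    false_and, if_false, add_zero, mul_zero, sub_zero, mul_one] at h
  rw [h]
  ring

theorem coeff_taylor_B_succ_succ {i : ℕ} (hi : 1 ≤ i) (hin : i < n) (k : ℕ) :
    (taylor (-r) (B (i + 1))).coeff (k + 1) = (taylor (-r) (B i)).coeff (k + 2) -
      c * x i * ((if k < i then x (k + 1) else 0) + (if k + 1 < i then x (k + 1) else 0)) := by
  have h := congrArg (coeff · (k + 2)) (hrec.X_mul_taylor_B_succ hi hin)
  simp only [coeff_X_mul, coeff_add, coeff_sub, coeff_C_mul, coeff_X, coeff_C,
    coeff_sum_C_mul_X_pow, mem_Icc, mem_Ico, le_add_iff_nonneg_left, zero_le, true_and,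
    Nat.add_one_le_iff, Nat.add_one_ne_zero, if_false, if_neg (show 1 ≠ k + 2 by omega),
    sub_zero, mul_zero, zero_sub] at h
  rw [h]
  ring

variable {Γ : Type*} [LinearOrderedAddCommMonoidWithTop Γ] (v : AddValuation F Γ)

theorem le_valuation_x_succ [CharZero F] (hr : r ≠ 0) (had : 0 ≤ v (a - d)) {i : ℕ}
    (hi : 1 ≤ i) (hin : i < n) (hx : v b ≤ v (i ! * r ^ i * x i))
    (hβ : v b ≤ v (i ! * r ^ i * (taylor (-r) (B i)).coeff 1)) :
    v b ≤ v ((i + 1)! * r ^ (i + 1) * x (i + 1)) := by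
  rw [hrec.x_succ i hi hin, ← taylor_coeff_zero, Nat.cast_factorial_succ_mul_pow_succ_mul_div hr,
    v.map_neg, hrec.coeff_taylor_B_succ_zero hi hin, mul_sub, mul_add]
  refine v.map_le_sub (v.map_le_add ?_ hβ) ?_
  · rw [mul_comm (x i), mul_left_comm]
    exact hx.trans (v.le_map_mul_of_nonneg_left had _)
  · rw [mul_left_comm]
    exact hx.trans (v.le_map_mul_of_nonneg_left (v.map_natCast_nonneg i) _)

theorem le_valuation_coeff_succ (hbc : 0 ≤ v (b * c)) {i : ℕ} (hi : 1 ≤ i) (hin : i < n)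
    (hx : ∀ j, 1 ≤ j → j ≤ i → v b ≤ v (j ! * r ^ j * x j))
    (hβ : ∀ k, v b ≤ v ((k + i)! * r ^ (k + i) * (taylor (-r) (B i)).coeff (k + 1)))
    (k : ℕ) :
    v b ≤ v ((k + (i + 1))! * r ^ (k + (i + 1)) * (taylor (-r) (B (i + 1))).coeff (k + 1)) := by
  rw [hrec.coeff_taylor_B_succ_succ hi hin, mul_sub, show k + (i + 1) = k + 1 + i by omega]
  refine v.map_le_sub (hβ (k + 1)) ?_
  by_cases hk : k < i
  · have hζ : v b ≤ v ((k + 1)! * r ^ (k + 1) *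
        (x (k + 1) + if k + 1 < i then x (k + 1) else 0)) := by
      rw [mul_add]
      refine v.map_le_add (hx _ (by omega) hk) ?_
      split_ifs
      · exact hx _ (by omega) hk
      · simp
    have hprod := (v.le_map_mul_mul hbc (hx i hi le_rfl) hζ).trans
      (v.le_map_mul_of_nonneg_left (v.map_natCast_nonneg ((k + 1 + i).choose i)) _)
    rw [if_pos hk, Nat.cast_factorial_add_mul_pow r (k + 1) i]
    convert hprod using 2
    ring
  · simp [hk, show ¬k + 1 < i by omega]

theorem le_valuation_x_and_coeff [CharZero F] (hr : r ≠ 0) (had : 0 ≤ v (a - d))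
    (hbc : 0 ≤ v (b * c)) {i : ℕ} (hi : 1 ≤ i) (hin : i ≤ n) :
    (∀ j, 1 ≤ j → j ≤ i → v b ≤ v (j ! * r ^ j * x j)) ∧
      ∀ k, v b ≤ v ((k + i)! * r ^ (k + i) * (taylor (-r) (B i)).coeff (k + 1)) := by
  induction i, hi using Nat.le_induction with
  | base =>
    refine ⟨fun j hj1 hj => ?_, fun k => by simp [hrec.B_one, taylor_C]⟩
    obtain rfl : j = 1 := by omega
    rw [hrec.x_one, show (1 ! : F) * r ^ 1 * (b / -r) = -b by field_simp; simp, v.map_neg]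
  | succ i hi ih =>
    obtain ⟨hx, hβ⟩ := ih (by omega)
    refine ⟨fun j hj1 hj => ?_, hrec.le_valuation_coeff_succ v hbc hi (by omega) hx hβ⟩
    rcases hj.lt_or_eq with hj | rfl
    · exact hx j hj1 (Nat.lt_succ_iff.mp hj)
    · exact hrec.le_valuation_x_succ v hr had hi (by omega) (hx i hi le_rfl) (by simpa using hβ 0)

theorem le_valuation_factorial_mul_pow_mul [CharZero F] (hr : r ≠ 0)
    (had : 0 ≤ v (a - d)) (hbc : 0 ≤ v (b * c)) {i : ℕ} (hi : 1 ≤ i) (hin : i ≤ n) :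
    v b ≤ v (i ! * r ^ i * x i) :=
  (hrec.le_valuation_x_and_coeff v hr had hbc hi hin).1 i hi le_rfl

end IsRecursion

theorem valuation_of_x_recursion_general {F : Type*} [Field F] (p : ℕ) (hp : p.Prime)
    (vp : F → WithTop ℝ)
    (hvp0 : vp 0 = ⊤)
    (hmul : ∀ x y : F, vp (x * y) = vp x + vp y)
    (hadd : ∀ x y : F, min (vp x) (vp y) ≤ vp (x + y))
    (hvpp : vp ((p : ℕ) : F) = ((1 : ℝ) : WithTop ℝ))
    (h : ℕ)
    (a b c d : F)
    (had : (0 : WithTop ℝ) ≤ vp (a - d))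
    (hbc : (0 : WithTop ℝ) ≤ vp (b * c))
    (D B : ℕ → Polynomial F) (x : ℕ → F)
    (hD1 : D 1 = C d) (hB1 : B 1 = C b) (hx1 : x 1 = b / (-(p : F)))
    (hDrec : ∀ i, 1 ≤ i → i < h - 1 →
      D (i + 1) = D i + C c * C (x i) * (X + C (p : F)) ^ i)
    (hBrec : ∀ i, 1 ≤ i → i < h - 1 →
      (X + C (p : F)) * B (i + 1) =
        (X + C (p : F)) *
            (C (x i) * (C a - C c * (∑ j ∈ Finset.Icc 1 i, C (x j) * (X + C (p : F)) ^ j) - D i)) +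
          (B i - (i : Polynomial F) * C (x i) * X))
    (hxrec : ∀ i, 1 ≤ i → i < h - 1 →
      x (i + 1) = (B (i + 1)).eval (-(p : F)) / (((i : F) + 1) * (-(p : F)))) :
    ∀ i, 1 ≤ i → i ≤ h - 1 →
      vp b ≤ vp (x i) + ((padicValNat p (Nat.factorial i) : ℝ) : WithTop ℝ) + ((i : ℝ) : WithTop ℝ) := by
  intro i hi hin
  have : Fact p.Prime := ⟨hp⟩
  have hvp1 : vp 1 = 0 :=
    WithTop.add_left_cancel (hvpp ▸ WithTop.coe_ne_top) (by rw [← hmul, mul_one, add_zero])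
  let v := AddValuation.of vp hvp0 hvp1 hadd hmul
  have hvp : v p = 1 := hvpp
  have hv_nat {m : ℕ} (hm : m ≠ 0) : v m = padicValNat p m := by
    rw [v.map_natCast_eq_padicValNat_nsmul (hvp ▸ zero_lt_one) hm, hvp, nsmul_one]
  have : CharZero F := charZero_of_inj_zero fun m hm => by
    by_contra hm0
    simpa [hm, v, AddValuation.of_apply, hvp0] using hv_nat hm0
  have hrec : IsRecursion (p : F) a b c d (h - 1) D B x :=
    ⟨hD1, hB1, hx1, hDrec, hBrec, hxrec⟩
  have key :=
    hrec.le_valuation_factorial_mul_pow_mul v (by exact_mod_cast hp.ne_zero) had hbc hi hin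
  rw [v.map_mul, v.map_mul, v.map_pow, hv_nat (Nat.factorial_ne_zero i)] at key
  simpa [v, AddValuation.of_apply, hvpp, add_comm, add_left_comm] using key

/-- With the recursive definitions of `d_i`, `b_i`, `x_i` (Lemma `lem-ind-ab` of the paper),
for every `1 ≤ i ≤ h-1` one has `v_p(x_i) + v_p(i!) + i ≥ v_p(b)`.  Here `v_p` takes values
in `WithTop ℝ` (with `v_p(0) = ⊤`), `π = -p`, `E = u + p`, and the exact division
`(b_i - x_i i u)/E` is encoded by multiplying the recursion for `b_{i+1}` through by `E`. -/
theorem valuation_of_x_recursion {F : Type*} [Field F] (p : ℕ) (hp : p.Prime) (hodd : p ≠ 2)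
    (vp : F → WithTop ℝ)
    (hvp0 : vp 0 = ⊤)
    (hmul : ∀ x y : F, vp (x * y) = vp x + vp y)
    (hadd : ∀ x y : F, min (vp x) (vp y) ≤ vp (x + y))
    (hvpp : vp ((p : ℕ) : F) = ((1 : ℝ) : WithTop ℝ))
    (h : ℕ) (hh : 2 ≤ h)
    (a b c d : F)
    (had : (0 : WithTop ℝ) ≤ vp (a - d))
    (hbc : (0 : WithTop ℝ) ≤ vp (b * c))
    (D B : ℕ → Polynomial F) (x : ℕ → F)
    (hD1 : D 1 = C d) (hB1 : B 1 = C b) (hx1 : x 1 = b / (-(p : F)))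
    (hDrec : ∀ i, 1 ≤ i → i < h - 1 →
      D (i + 1) = D i + C c * C (x i) * (X + C (p : F)) ^ i)
    (hBrec : ∀ i, 1 ≤ i → i < h - 1 →
      (X + C (p : F)) * B (i + 1) =
        (X + C (p : F)) *
            (C (x i) * (C a - C c * (∑ j ∈ Finset.Icc 1 i, C (x j) * (X + C (p : F)) ^ j) - D i)) +
          (B i - (i : Polynomial F) * C (x i) * X))
    (hxrec : ∀ i, 1 ≤ i → i < h - 1 →
      x (i + 1) = (B (i + 1)).eval (-(p : F)) / (((i : F) + 1) * (-(p : F)))) :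
    ∀ i, 1 ≤ i → i ≤ h - 1 →
      vp b ≤ vp (x i) + ((padicValNat p (Nat.factorial i) : ℝ) : WithTop ℝ) + ((i : ℝ) : WithTop ℝ) :=
  valuation_of_x_recursion_general p hp vp hvp0 hmul hadd hvpp h a b c d had hbc D B x hD1 hB1 hx1
    hDrec hBrec hxrec
end

section
/- Let R be a commutative ring, phi: R -> R a ring endomorphism, and E in R an element such that phi(E) is a unit. Suppose A, B in Mat_d(R) satisfy AB = BA = E^h I_d, and A', B' in Mat_{d'}(R) satisfy A'B' = B'A' = E^h I_{d'}, where E is a nonzerodivisor. If X is a d' x d matrix with X phi(A) = phi(A') phi(X) and X B = B' Y for some d' x d matrix Y, then X = phi(Y) and Y A = A' phi(Y). -/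
open Matrix

/-- Key linear-algebra step for full faithfulness: if `AB = BA = E^h I`,
`A'B' = B'A' = E^h I`, `X φ(A) = φ(A') φ(X)` and `X B = B' Y`, with `E` a nonzerodivisor
and `φ(E)` a unit, then `X = φ(Y)` and `Y A = A' φ(Y)`. -/
theorem full_faithfulness_matrix_step {R : Type*} [CommRing R] (d d' h : ℕ)
    (φ : R →+* R) (E : R) (hEnzd : ∀ x : R, E * x = 0 → x = 0) (hE : IsUnit (φ E))
    (A B : Matrix (Fin d) (Fin d) R) (A' B' : Matrix (Fin d') (Fin d') R)
    (hAB : A * B = E ^ h • (1 : Matrix (Fin d) (Fin d) R))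
    (hBA : B * A = E ^ h • (1 : Matrix (Fin d) (Fin d) R))
    (hAB' : A' * B' = E ^ h • (1 : Matrix (Fin d') (Fin d') R))
    (hBA' : B' * A' = E ^ h • (1 : Matrix (Fin d') (Fin d') R))
    (X Y : Matrix (Fin d') (Fin d) R)
    (h1 : X * A.map φ = A'.map φ * X.map φ)
    (h2 : X * B = B' * Y) :
    X = Y.map φ ∧ Y * A = A' * Y.map φ := by
  -- map of E^h • 1
  have hmap1 : ∀ n, (E ^ h • (1 : Matrix (Fin n) (Fin n) R)).map φ
      = φ E ^ h • (1 : Matrix (Fin n) (Fin n) R) := by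
    intro n
    ext i j
    simp [Matrix.map_apply, Matrix.one_apply, apply_ite φ, map_pow]
  have hφAB : A.map φ * B.map φ = φ E ^ h • (1 : Matrix (Fin d) (Fin d) R) := by
    rw [← Matrix.map_mul, hAB, hmap1]
  have hφAB' : (A'.map φ) * (B'.map φ) = φ E ^ h • (1 : Matrix (Fin d') (Fin d') R) := by
    rw [← Matrix.map_mul, hAB', hmap1]
  -- key computation
  have key : φ E ^ h • X = φ E ^ h • Y.map φ := by
    calc φ E ^ h • X = X * (A.map φ * B.map φ) := by rw [hφAB]; simp [Matrix.mul_smul]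
    _ = (X * A.map φ) * B.map φ := by rw [Matrix.mul_assoc]
    _ = A'.map φ * (X.map φ * B.map φ) := by rw [h1, Matrix.mul_assoc]
    _ = A'.map φ * (X * B).map φ := by rw [Matrix.map_mul]
    _ = A'.map φ * (B'.map φ * Y.map φ) := by rw [h2, Matrix.map_mul]
    _ = (A'.map φ * B'.map φ) * Y.map φ := by rw [Matrix.mul_assoc]
    _ = φ E ^ h • Y.map φ := by rw [hφAB']; simp [Matrix.smul_mul]
  have hXY : X = Y.map φ := by
    have hu : IsUnit (φ E ^ h) := hE.pow h
    ext i j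
    have := congrArg (fun M => M i j) key
    simp only [Matrix.smul_apply, smul_eq_mul] at this
    exact hu.mul_left_cancel this
  refine ⟨hXY, ?_⟩
  -- nonzerodivisor power
  have hEpow' : ∀ n : ℕ, ∀ x : R, E ^ n * x = 0 → x = 0 := by
    intro n
    induction n with
    | zero => intro x hx; simpa using hx
    | succ n ih =>
      intro x hx
      apply ih
      apply hEnzd
      rw [← mul_assoc, mul_comm E (E ^ n)]
      simpa [pow_succ, mul_assoc] using hx
  have hEpow := hEpow' h
  have h2' : Y.map φ * B = B' * Y := by rw [← hXY]; exact h2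
  have hB' : B' * (Y * A) = B' * (A' * Y.map φ) := by
    calc B' * (Y * A) = (B' * Y) * A := by rw [Matrix.mul_assoc]
    _ = (Y.map φ * B) * A := by rw [h2']
    _ = Y.map φ * (B * A) := by rw [Matrix.mul_assoc]
    _ = E ^ h • Y.map φ := by rw [hBA]; simp [Matrix.mul_smul]
    _ = (B' * A') * Y.map φ := by rw [hBA']; simp [Matrix.smul_mul]
    _ = B' * (A' * Y.map φ) := by rw [Matrix.mul_assoc]
  have key2 : E ^ h • (Y * A) = E ^ h • (A' * Y.map φ) := by
    calc E ^ h • (Y * A) = (A' * B') * (Y * A) := by rw [hAB']; simp [Matrix.smul_mul]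
    _ = A' * (B' * (Y * A)) := by rw [Matrix.mul_assoc]
    _ = A' * (B' * (A' * Y.map φ)) := by rw [hB']
    _ = (A' * B') * (A' * Y.map φ) := by rw [Matrix.mul_assoc]
    _ = E ^ h • (A' * Y.map φ) := by rw [hAB']; simp [Matrix.smul_mul]
  ext i j
  have := congrArg (fun M => M i j) key2
  simp only [Matrix.smul_apply, smul_eq_mul] at this
  have hsub : E ^ h * ((Y * A) i j - (A' * Y.map φ) i j) = 0 := by
    rw [mul_sub, this, sub_self]
  exact sub_eq_zero.mp (hEpow _ hsub)
end

section
/- Let z = sum_{j=1}^{h-1} x_j (u+p)^j with v_p(x_j) > -j - 1 for all j, and p = h = 3. Then every coefficient a_i of phi(z) - z(0) = sum_j x_j (u^{3} + 3)^j - z(0) (where z(0) is the constant term of z, equal to sum_j x_j p^j, and phi(z)(0) = z(0)) satisfies i + 2 v_p(a_i) > -1 for i >= 1; that is, v_{R_2}(phi(z) - phi(z)(0)) > -1. -/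
open Polynomial

/-- For `p = h = 3`: with `z = x₁(u+3) + x₂(u+3)²`, `v_p(x_j) > -j-1`, and
`φ(z) = x₁(u³+3) + x₂(u³+3)²`, one has `φ(z)(0) = z(0)` and every coefficient `aᵢ`
(`i ≥ 1`) of `φ(z) - z(0)` satisfies `i + 2 v_p(aᵢ) > -1`; that is,
`v_{R₂}(φ(z) - φ(z)(0)) > -1`. -/
theorem phi_z_estimate_p3_h3 {F : Type*} [Field F]
    (vp : F → ℝ)
    (hmul : ∀ x y : F, x ≠ 0 → y ≠ 0 → vp (x * y) = vp x + vp y)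
    (hadd : ∀ x y : F, x ≠ 0 → y ≠ 0 → x + y ≠ 0 → min (vp x) (vp y) ≤ vp (x + y))
    (hvpp : vp ((3 : ℕ) : F) = 1)
    (x1 x2 : F)
    (hx1 : x1 ≠ 0 → (-2 : ℝ) < vp x1)
    (hx2 : x2 ≠ 0 → (-3 : ℝ) < vp x2) :
    (C x1 * (X ^ 3 + C (3 : F)) + C x2 * (X ^ 3 + C (3 : F)) ^ 2).eval 0 =
        (C x1 * (X + C (3 : F)) + C x2 * (X + C (3 : F)) ^ 2).eval 0 ∧
    ∀ i : ℕ, 1 ≤ i →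
      (C x1 * (X ^ 3 + C (3 : F)) + C x2 * (X ^ 3 + C (3 : F)) ^ 2 -
          C ((C x1 * (X + C (3 : F)) + C x2 * (X + C (3 : F)) ^ 2).eval 0)).coeff i ≠ 0 →
      (-1 : ℝ) < (i : ℝ) +
        2 * vp ((C x1 * (X ^ 3 + C (3 : F)) + C x2 * (X ^ 3 + C (3 : F)) ^ 2 -
          C ((C x1 * (X + C (3 : F)) + C x2 * (X + C (3 : F)) ^ 2).eval 0)).coeff i) := by

  have h0 : ((C x1 * (X + C (3:F)) + C x2 * (X + C (3:F)) ^ 2).eval 0) = x1*3 + x2*9 := by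
    simp only [eval_add, eval_mul, eval_pow, eval_X, eval_C, zero_add]; ring
  have e9 : (C (9:F) : F[X]) = C 3 * C 3 := by rw [← C_mul]; norm_num
  have e6 : (C (6:F) : F[X]) = C 3 + C 3 := by rw [← C_add]; norm_num
  have hPoly : C x1 * (X ^ 3 + C (3 : F)) + C x2 * (X ^ 3 + C (3 : F)) ^ 2 -
      C ((C x1 * (X + C (3 : F)) + C x2 * (X + C (3 : F)) ^ 2).eval 0) =
      C (x1 + 6 * x2) * X ^ 3 + C x2 * X ^ 6 := by
    rw [h0]
    simp only [C_add, C_mul, e6, e9]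
    ring
  have hv3 : vp (3:F) = 1 := by
    have : ((3:ℕ):F) = (3:F) := by norm_num
    rw [← this]; exact hvpp
  constructor
  · simp
  · intro i hi hne
    rw [hPoly] at hne ⊢
    have hcoeff : ∀ j : ℕ, (C (x1 + 6 * x2) * X ^ 3 + C x2 * X ^ 6).coeff j =
        (if j = 3 then x1 + 6 * x2 else 0) + (if j = 6 then x2 else 0) := by
      intro j
      rw [coeff_add, coeff_C_mul, coeff_C_mul, coeff_X_pow, coeff_X_pow]
      split_ifs <;> ring
    rw [hcoeff] at hne ⊢
    have h6 : (6 : F) * x2 = 3 * x2 + 3 * x2 := by ring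
    by_cases h3 : i = 3
    · subst h3
      simp only [if_pos rfl] at hne ⊢
      norm_num at hne ⊢
      have key : (-2 : ℝ) < vp (x1 + 6 * x2) := by
        by_cases hx1z : x1 = 0
        · rw [hx1z, zero_add] at hne ⊢
          have hx2z : x2 ≠ 0 := fun h => hne (by rw [h]; ring)
          have h3ne : (3:F) ≠ 0 := fun h => hne (by
            rw [show (6:F) = 2*3 by norm_num, h]; ring)
          have h3x2 : (3:F) * x2 ≠ 0 := mul_ne_zero h3ne hx2z
          have := hadd (3*x2) (3*x2) h3x2 h3x2 (by rw [← h6]; exact hne)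
          rw [h6]
          refine lt_of_lt_of_le ?_ this
          rw [hmul 3 x2 h3ne hx2z, min_self, hv3]
          linarith [hx2 hx2z]
        · by_cases h6z : (6:F) * x2 = 0
          · rw [h6z, add_zero] at hne ⊢
            exact hx1 hx1z
          · have hx2z : x2 ≠ 0 := fun h => h6z (by rw [h]; ring)
            have h3ne : (3:F) ≠ 0 := fun h => h6z (by
              rw [show (6:F) = 2*3 by norm_num, h]; ring)
            have hv6 : (-2:ℝ) < vp (6 * x2) := by
              have h3x2 : (3:F) * x2 ≠ 0 := mul_ne_zero h3ne hx2z
              have := hadd (3*x2) (3*x2) h3x2 h3x2 (by rw [← h6]; exact h6z)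
              rw [h6]
              refine lt_of_lt_of_le ?_ this
              rw [hmul 3 x2 h3ne hx2z, min_self, hv3]
              linarith [hx2 hx2z]
            have := hadd x1 (6*x2) hx1z h6z hne
            refine lt_of_lt_of_le ?_ this
            exact lt_min (hx1 hx1z) hv6
      linarith
    · by_cases h6' : i = 6
      · subst h6'
        simp only [if_pos rfl] at hne ⊢
        norm_num at hne ⊢
        have := hx2 hne
        linarith
      · simp [h3, h6'] at hne
end
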